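/- There exist no vectors α, β ∈ ℂ²⊗ℂ² ≅ ℂ⁴ such that ⟨γ^{ij}, α ⊗ β⟩ = 0 for every ordered pair (i,j) with i ≠ j and (i,j) ≠ (1,2), while ⟨γ^{12}, α ⊗ β⟩ ≠ 0. That is, the state γ^{12} admits no product detecting state across the A1A2 : B1B2 bipartition; hence, by Chefles' criterion, the set S^Bell_{(2)} is not conclusively distinguishable via LOCC, so the four Bell states do not allow 2-CLSM and mutual orthogonality does not guarantee conclusive markability under LOCC (Proposition 6). -/

import Mathlib

/-!
Writing `Bⁱ = (1/√2) vec Pᵢ` with `Pᵢ ∈ {1, Z, X, ZX}`, the overlap `⟪γ^{ij}, α ⊗ β⟫` is, up to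
the factor `1/2`, the pairing `Σ Pᵢ(a,b) Pⱼ(c,d) α(a,c) β(b,d)`, which is bilinear in `(Pᵢ, Pⱼ)`.
Since `1 ± Z` and `X ± ZX` are twice the matrix units, orthogonality to `γ^{ij}` for `i ∈ {1,2}`,
`j ∈ {3,4}` (and symmetrically) kills every cross term `α(u) β(v)` with `u ≠ v` adjacent in
`{0,1}²`. Then the diagonal products `p_u = α(u) β(u)` satisfy `p_u p_v = 0` for adjacent `u, v`,
and together with orthogonality to `γ^{21}` this forces the overlap with `γ^{12}`,
proportional to `t = p₀₀ - p₀₁ + p₁₀ - p₁₁`, to satisfy `t² = 0`.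
-/

noncomputable section
open scoped ComplexInnerProductSpace

/-- The qubit Hilbert space `ℂ²`. -/
abbrev Qubit : Type := EuclideanSpace ℂ (Fin 2)

/-- The (Kronecker) tensor product of two vectors, realized in `EuclideanSpace ℂ (ι × κ)`. -/
def tp {ι κ : Type} (x : EuclideanSpace ℂ ι) (y : EuclideanSpace ℂ κ) :
    EuclideanSpace ℂ (ι × κ) :=
  (WithLp.equiv 2 (ι × κ → ℂ)).symm (fun p => x p.1 * y p.2)

/-- A qubit vector from its two coordinates. -/
def mk2 (a b : ℂ) : Qubit := (WithLp.equiv 2 (Fin 2 → ℂ)).symm ![a, b]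

/-- `1/√2` in `ℂ`. -/
def c2 : ℂ := ((Real.sqrt 2 : ℂ))⁻¹

/-- The four Bell states `B¹ = (|00⟩+|11⟩)/√2`, `B² = (|00⟩−|11⟩)/√2`,
`B³ = (|01⟩+|10⟩)/√2`, `B⁴ = (|01⟩−|10⟩)/√2` (indexed by `Fin 4`). -/
def bell : Fin 4 → EuclideanSpace ℂ (Fin 2 × Fin 2) :=
  ![c2 • (tp (mk2 1 0) (mk2 1 0) + tp (mk2 0 1) (mk2 0 1)),
    c2 • (tp (mk2 1 0) (mk2 1 0) - tp (mk2 0 1) (mk2 0 1)),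
    c2 • (tp (mk2 1 0) (mk2 0 1) + tp (mk2 0 1) (mk2 1 0)),
    c2 • (tp (mk2 1 0) (mk2 0 1) - tp (mk2 0 1) (mk2 1 0))]

/-- The 2-CLSM vectors of the Bell basis in the `A1A2 : B1B2` grouping:
`γ^{ij} = Σ_{a,b,c,d} cⁱ_{ab} cʲ_{cd} (|a⟩⊗|c⟩) ⊗ (|b⟩⊗|d⟩)`, i.e. the vector whose
coordinate at `((a, c), (b, d))` is `Bⁱ (a, b) · Bʲ (c, d)`.  The first `ℂ⁴` factor
(indices `(a, c)`) is Alice's system `A1A2`, the second (indices `(b, d)`) Bob's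
`B1B2`. -/
def γ (i j : Fin 4) : EuclideanSpace ℂ ((Fin 2 × Fin 2) × (Fin 2 × Fin 2)) :=
  (WithLp.equiv 2 (((Fin 2 × Fin 2) × (Fin 2 × Fin 2)) → ℂ)).symm
    (fun p => bell i (p.1.1, p.2.1) * bell j (p.1.2, p.2.2))

lemma conj_c2 : (starRingEnd ℂ) c2 = c2 := by
  simp [c2, Complex.conj_ofReal]

lemma c2_ne_zero : c2 ≠ 0 :=
  inv_ne_zero (Complex.ofReal_ne_zero.mpr (by positivity))

def pauli : Fin 4 → Matrix (Fin 2) (Fin 2) ℂ :=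
  ![!![1, 0; 0, 1], !![1, 0; 0, -1], !![0, 1; 1, 0], !![0, 1; -1, 0]]

lemma bell_apply (i : Fin 4) (a b : Fin 2) : bell i (a, b) = c2 * pauli i a b := by
  fin_cases i <;> fin_cases a <;> fin_cases b <;> simp [bell, pauli, tp, mk2]

lemma conj_pauli (i : Fin 4) (a b : Fin 2) : (starRingEnd ℂ) (pauli i a b) = pauli i a b := by
  fin_cases i <;> fin_cases a <;> fin_cases b <;> simp [pauli]

section crossPairing

variable {R : Type*} [CommSemiring R] {m n : Type*} [Fintype m] [Fintype n]

def crossPairing (P Q : Matrix m n R) (x : m × m → R) (y : n × n → R) : R :=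
  ∑ p : (m × m) × (n × n), P p.1.1 p.2.1 * Q p.1.2 p.2.2 * x p.1 * y p.2

lemma crossPairing_swap (P Q : Matrix m n R) (x : m × m → R) (y : n × n → R) :
    crossPairing Q P x y = crossPairing P Q (x ∘ Prod.swap) (y ∘ Prod.swap) :=
  Fintype.sum_equiv ((Equiv.prodComm m m).prodCongr (Equiv.prodComm n n)) _ _
    fun _ => by
      simp only [Equiv.prodCongr_apply, Prod.map, Equiv.prodComm_apply, Function.comp_apply,
        Prod.fst_swap, Prod.snd_swap, Prod.swap_swap]
      ring

end crossPairing

lemma inner_γ_tp (i j : Fin 4) (α β : EuclideanSpace ℂ (Fin 2 × Fin 2)) :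
    ⟪γ i j, tp α β⟫ = c2 ^ 2 * crossPairing (pauli i) (pauli j) α β := by
  simp only [PiLp.inner_apply, RCLike.inner_apply, crossPairing, Finset.mul_sum, γ, tp,
    WithLp.equiv_symm_apply, map_mul, bell_apply, conj_c2, conj_pauli]
  refine Finset.sum_congr rfl fun _ _ => by ring

lemma sub_add_sub_eq_zero_of_add_sub_sub_eq_zero {R : Type*} [CommRing R] [IsReduced R]
    {a b c d : R} (hab : a * b = 0) (hac : a * c = 0) (hbd : b * d = 0) (hcd : c * d = 0)
    (h : a + b - c - d = 0) : a - b + c - d = 0 :=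
  -- `(a - b + c - d)² = (a + b - c - d)² + 4 (a c - a b - c d + b d)`
  IsReduced.eq_zero _ ⟨2, by
    linear_combination (a + b - c - d) * h + 4 * hac - 4 * hab - 4 * hcd + 4 * hbd⟩

section pauli

variable (x y : Fin 2 × Fin 2 → ℂ)

lemma crossPairing_pauli_zero_one : crossPairing (pauli 0) (pauli 1) x y =
    x (0, 0) * y (0, 0) - x (0, 1) * y (0, 1) + x (1, 0) * y (1, 0) - x (1, 1) * y (1, 1) := by
  simp only [crossPairing, pauli, Fintype.sum_prod_type, Fin.sum_univ_two, Matrix.of_apply,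
    Matrix.cons_val', Matrix.cons_val_zero, Matrix.cons_val_one, Matrix.cons_val_fin_one]
  ring

lemma cross_mul_eq_zero_of_crossPairing_pauli
    (h02 : crossPairing (pauli 0) (pauli 2) x y = 0)
    (h03 : crossPairing (pauli 0) (pauli 3) x y = 0)
    (h12 : crossPairing (pauli 1) (pauli 2) x y = 0)
    (h13 : crossPairing (pauli 1) (pauli 3) x y = 0) :
    x (0, 0) * y (0, 1) = 0 ∧ x (0, 1) * y (0, 0) = 0 ∧
      x (1, 0) * y (1, 1) = 0 ∧ x (1, 1) * y (1, 0) = 0 := by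
  simp only [crossPairing, pauli, Fintype.sum_prod_type, Fin.sum_univ_two, Matrix.of_apply,
    Matrix.cons_val', Matrix.cons_val_zero, Matrix.cons_val_one, Matrix.cons_val,
    Matrix.cons_val_fin_one] at h02 h03 h12 h13
  refine ⟨?_, ?_, ?_, ?_⟩
  · linear_combination (h02 + h03 + h12 + h13) / 4
  · linear_combination (h02 - h03 + h12 - h13) / 4
  · linear_combination (h02 + h03 - h12 - h13) / 4
  · linear_combination (h02 - h03 - h12 + h13) / 4

end pauli

/-- There are no `α, β ∈ ℂ²⊗ℂ² ≅ ℂ⁴` such that `α ⊗ β` is orthogonal to every `γ^{ij}`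
with `i ≠ j`, `(i, j) ≠ (1, 2)` (here `(0, 1)` in `Fin 4` indexing) while having nonzero
overlap with `γ^{12}`: the state `γ^{12}` admits no product detecting state. -/
theorem bell_2CLSM_no_product_detecting_state :
    ¬ ∃ α β : EuclideanSpace ℂ (Fin 2 × Fin 2),
      (∀ i j : Fin 4, i ≠ j → (i, j) ≠ ((0 : Fin 4), (1 : Fin 4)) →
        ⟪γ i j, tp α β⟫ = 0) ∧
      ⟪γ 0 1, tp α β⟫ ≠ 0 := by
  rintro ⟨α, β, horth, hdetect⟩
  have hform (i j : Fin 4) (hij : i ≠ j) (hne : (i, j) ≠ (0, 1)) :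
      crossPairing (pauli i) (pauli j) α β = 0 := by
    simpa [inner_γ_tp, c2_ne_zero] using horth i j hij hne
  have hform_swap (i j : Fin 4) (hij : j ≠ i) (hne : (j, i) ≠ (0, 1)) :
      crossPairing (pauli i) (pauli j) (α ∘ Prod.swap) (β ∘ Prod.swap) = 0 := by
    rw [← crossPairing_swap]; exact hform j i hij hne
  obtain ⟨h₁, -, h₃, -⟩ := cross_mul_eq_zero_of_crossPairing_pauli α β
    (hform 0 2 (by decide) (by decide)) (hform 0 3 (by decide) (by decide))
    (hform 1 2 (by decide) (by decide)) (hform 1 3 (by decide) (by decide))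
  obtain ⟨h₅, -, h₇, -⟩ := cross_mul_eq_zero_of_crossPairing_pauli _ _
    (hform_swap 0 2 (by decide) (by decide)) (hform_swap 0 3 (by decide) (by decide))
    (hform_swap 1 2 (by decide) (by decide)) (hform_swap 1 3 (by decide) (by decide))
  have h₀ := hform_swap 0 1 (by decide) (by decide)
  simp only [Function.comp_apply, Prod.swap_prod_mk, crossPairing_pauli_zero_one] at h₅ h₇ h₀
  -- a product of two diagonal terms in adjacent positions factors through a cross term
  have hdiag : α (0, 0) * β (0, 0) - α (0, 1) * β (0, 1) + α (1, 0) * β (1, 0) -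
      α (1, 1) * β (1, 1) = 0 := sub_add_sub_eq_zero_of_add_sub_sub_eq_zero
    (by linear_combination (α (0, 1) * β (0, 0)) * h₁)
    (by linear_combination (α (1, 0) * β (0, 0)) * h₅)
    (by linear_combination (α (1, 1) * β (0, 1)) * h₇)
    (by linear_combination (α (1, 1) * β (1, 0)) * h₃)
    (by linear_combination h₀)
  exact hdetect (by rw [inner_γ_tp, crossPairing_pauli_zero_one, hdiag, mul_zero])
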